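/- Second-price auctions with additive value boosts have price of anarchy at most (c+2)/(c+1) under undominated bids: fix c > 0, and consider n value-maximizing bidders and m single-slot auctions with values v_ij ≥ 0 and RoS targets τ_i > 0. Each bidder i receives an additive boost c · v_ij / τ_i in auction j, so its score is s_ij = b_ij + c · v_ij / τ_i. Suppose bids satisfy b_ij ≥ v_ij / τ_i (undominatedness); the allocation x assigns each auction j fully to bidders with the highest score (x_ij ∈ [0,1], Σ_i x_ij = 1, x_ij > 0 only if s_ij = max_k s_kj); the payment of bidder i in auction j is p_ij = x_ij · max{ 0, (max_{k≠i} s_kj) − c · v_ij / τ_i }; and every bidder's RoS constraint Σ_j x_ij v_ij ≥ τ_i Σ_j p_ij holds. Then for every feasible allocation y (y_ij ∈ [0,1], Σ_i y_ij ≤ 1 for all j), Σ_i Σ_j y_ij v_ij / τ_i ≤ ((c+2)/(c+1)) · Σ_i Σ_j x_ij v_ij / τ_i. -/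

import Mathlib

/-!
Normalise values to `w i = v i / τ i`. Undominated bids make every score at least
`(1 + c) w k`, so the per-unit price `q i = max 0 (compMax s i - c w i)` of any bidder `i`
is at least `(1 + c) (w k - w i)` for every `k`. Averaging over the allocation of the auction
and then over any feasible allocation bounds the optimal welfare by the achieved welfare plus
total payments divided by `1 + c`, and the RoS constraints bound the total payments by the
achieved liquid welfare.
-/

open Finset

/-- The highest competing score against bidder `i`: the maximum of `f k` over `k ≠ i`
(interpreted as `0` when there are no other bidders). -/
noncomputable def compMax (n : ℕ) (f : Fin n → ℝ) (i : Fin n) : ℝ :=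
  ⨆ k ∈ Finset.univ.erase i, f k

section WeightedAverage

variable {ι R : Type*} [Semiring R] [PartialOrder R] [IsOrderedRing R]
  {s : Finset ι} {x f : ι → R} {a : R}

lemma le_sum_mul_of_forall_le (hx : ∀ i ∈ s, 0 ≤ x i) (hx₁ : ∑ i ∈ s, x i = 1)
    (hf : ∀ i ∈ s, a ≤ f i) : a ≤ ∑ i ∈ s, x i * f i :=
  calc a = ∑ i ∈ s, x i * a := by rw [← sum_mul, hx₁, one_mul]
    _ ≤ ∑ i ∈ s, x i * f i :=
      sum_le_sum fun i hi => mul_le_mul_of_nonneg_left (hf i hi) (hx i hi)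

lemma sum_mul_le_of_sum_le_one (hx : ∀ i ∈ s, 0 ≤ x i) (hx₁ : ∑ i ∈ s, x i ≤ 1)
    (ha : 0 ≤ a) (hf : ∀ i ∈ s, f i ≤ a) : ∑ i ∈ s, x i * f i ≤ a :=
  calc ∑ i ∈ s, x i * f i ≤ ∑ i ∈ s, x i * a :=
        sum_le_sum fun i hi => mul_le_mul_of_nonneg_left (hf i hi) (hx i hi)
    _ = (∑ i ∈ s, x i) * a := (sum_mul _ _ _).symm
    _ ≤ a := mul_le_of_le_one_left ha hx₁

end WeightedAverage

lemma le_compMax {n : ℕ} (f : Fin n → ℝ) {i k : Fin n} (hk : k ≠ i) :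
    f k ≤ compMax n f i :=
  le_ciSup₂ (f := fun k (_ : k ∈ univ.erase i) => f k)
    ((Set.finite_range f).bddAbove.mono (by simp [Set.subset_def]))
    k (mem_erase.mpr ⟨hk, mem_univ k⟩)

section SingleAuction

variable {n : ℕ} {c : ℝ} {w s : Fin n → ℝ}

lemma le_add_price_div (hc : 0 < 1 + c) (hw : ∀ i, 0 ≤ w i)
    (hs : ∀ k, (1 + c) * w k ≤ s k) (i k : Fin n) :
    w k ≤ w i + max 0 (compMax n s i - c * w i) / (1 + c) := by
  rw [← sub_le_iff_le_add', le_div_iff₀' hc]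
  by_cases hki : k = i
  · subst hki
    simp
  · have := le_compMax s hki
    linarith [hs k, hw i, le_max_right 0 (compMax n s i - c * w i)]

lemma sum_mul_le_welfare_add_payment_div {b x y : Fin n → ℝ} (hc : 0 < 1 + c)
    (hw : ∀ i, 0 ≤ w i) (hb : ∀ i, w i ≤ b i) (hs : ∀ i, s i = b i + c * w i)
    (hx : ∀ i, 0 ≤ x i) (hx₁ : ∑ i, x i = 1) (hy : ∀ i, 0 ≤ y i) (hy₁ : ∑ i, y i ≤ 1) :
    ∑ k, y k * w k ≤
      ∑ i, x i * w i + (∑ i, x i * max 0 (compMax n s i - c * w i)) / (1 + c) := by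
  have hscore : ∀ k, (1 + c) * w k ≤ s k := fun k => by linarith [hs k, hb k]
  refine sum_mul_le_of_sum_le_one (fun i _ => hy i) hy₁ ?_ fun k _ => ?_
  · exact add_nonneg (sum_nonneg fun i _ => mul_nonneg (hx i) (hw i))
      (div_nonneg (sum_nonneg fun i _ => mul_nonneg (hx i) (le_max_left _ _)) hc.le)
  · calc w k ≤ ∑ i, x i * (w i + max 0 (compMax n s i - c * w i) / (1 + c)) :=
          le_sum_mul_of_forall_le (fun i _ => hx i) hx₁
            fun i _ => le_add_price_div hc hw hscore i k
      _ = _ := by simp only [mul_add, sum_add_distrib, sum_div, mul_div_assoc]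

end SingleAuction

theorem spa_with_boosts_poa_le_general
    (c : ℝ) (hc : 0 < c)
    (n m : ℕ) (v : Fin n → Fin m → ℝ) (τ : Fin n → ℝ)
    (b x p s : Fin n → Fin m → ℝ)
    (hv : ∀ i j, 0 ≤ v i j) (hτ : ∀ i, 0 < τ i)
    (hb : ∀ i j, v i j / τ i ≤ b i j)
    (hs : ∀ i j, s i j = b i j + c * v i j / τ i)
    (hx01 : ∀ i j, 0 ≤ x i j ∧ x i j ≤ 1)
    (hxfull : ∀ j, ∑ i, x i j = 1)
    (hpay : ∀ i j, p i j =
      x i j * max 0 (compMax n (fun k => s k j) i - c * v i j / τ i))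
    (hros : ∀ i, τ i * ∑ j, p i j ≤ ∑ j, x i j * v i j)
    (y : Fin n → Fin m → ℝ)
    (hy01 : ∀ i j, 0 ≤ y i j ∧ y i j ≤ 1)
    (hyfeas : ∀ j, ∑ i, y i j ≤ 1) :
    ∑ i, ∑ j, y i j * v i j / τ i ≤
      ((c + 2) / (c + 1)) * ∑ i, ∑ j, x i j * v i j / τ i := by
  simp only [mul_div_assoc] at hs hpay ⊢
  set LW := ∑ i, ∑ j, x i j * (v i j / τ i)
  have h1c : 0 < 1 + c := by linarith
  have hpayments : ∑ j, ∑ i, p i j ≤ LW := by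
    rw [sum_comm]
    refine sum_le_sum fun i _ => ?_
    simp only [← mul_div_assoc, ← sum_div]
    exact (le_div_iff₀' (hτ i)).mpr (hros i)
  calc ∑ i, ∑ j, y i j * (v i j / τ i)
      = ∑ j, ∑ i, y i j * (v i j / τ i) := sum_comm
    _ ≤ ∑ j, (∑ i, x i j * (v i j / τ i) + (∑ i, p i j) / (1 + c)) :=
        sum_le_sum fun j _ => by
          simpa only [hpay] using sum_mul_le_welfare_add_payment_div h1c
            (fun i => div_nonneg (hv i j) (hτ i).le) (fun i => hb i j) (fun i => hs i j)
            (fun i => (hx01 i j).1) (hxfull j) (fun i => (hy01 i j).1) (hyfeas j)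
    _ = LW + (∑ j, ∑ i, p i j) / (1 + c) := by rw [sum_add_distrib, ← sum_div, sum_comm]
    _ ≤ LW + LW / (1 + c) := by gcongr
    _ = (c + 2) / (c + 1) * LW := by field_simp; ring

/-- Second-price auctions with additive value boosts `c · v i j / τ i` have price of
anarchy at most `(c+2)/(c+1)` under undominated bids: bidders are ranked by score
`s i j = b i j + c * v i j / τ i`, the winner pays the nonnegative part of the highest
competing score minus its own boost. -/
theorem spa_with_boosts_poa_le
    (c : ℝ) (hc : 0 < c)
    (n m : ℕ) (v : Fin n → Fin m → ℝ) (τ : Fin n → ℝ)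
    (b x p s : Fin n → Fin m → ℝ)
    (hv : ∀ i j, 0 ≤ v i j) (hτ : ∀ i, 0 < τ i)
    (hb : ∀ i j, v i j / τ i ≤ b i j)
    (hs : ∀ i j, s i j = b i j + c * v i j / τ i)
    (hx01 : ∀ i j, 0 ≤ x i j ∧ x i j ≤ 1)
    (hxfull : ∀ j, ∑ i, x i j = 1)
    (hwin : ∀ i j, 0 < x i j → ∀ k, s k j ≤ s i j)
    (hpay : ∀ i j, p i j =
      x i j * max 0 (compMax n (fun k => s k j) i - c * v i j / τ i))
    (hros : ∀ i, τ i * ∑ j, p i j ≤ ∑ j, x i j * v i j)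
    (y : Fin n → Fin m → ℝ)
    (hy01 : ∀ i j, 0 ≤ y i j ∧ y i j ≤ 1)
    (hyfeas : ∀ j, ∑ i, y i j ≤ 1) :
    ∑ i, ∑ j, y i j * v i j / τ i ≤
      ((c + 2) / (c + 1)) * ∑ i, ∑ j, x i j * v i j / τ i :=
  spa_with_boosts_poa_le_general c hc n m v τ b x p s hv hτ hb hs hx01 hxfull hpay hros y hy01
    hyfeas
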